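/- arXiv:2109.00776 — 5 statements merged into one kernel-verified Lean document; each statement's English description precedes it below -/
import Mathlib

section
/- If λ and λ' are partitions of positive integers with λ ≤ λ', then every λ-choosable finite simple graph is λ'-choosable. -/
/-!
Merging the colour classes of a `lam'`-assignment along the blocks in which `lam'` refines
`lam''` turns it into a `lam''`-assignment with the same lists: a union of disjoint classes meets
every list in the sum of their sizes. As every part of `lam` is at most the matching part of
`lam''`, each list can then be cut down class by class to a `lam`-assignment `L' ⊆ L`, and a
proper `L'`-colouring is a proper `L`-colouring.
-/

/-- `lam` is a partition of `k`: a finite multiset of positive integers summing to `k`. -/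
def IsPartitionOf (lam : Multiset ℕ) (k : ℕ) : Prop :=
  (∀ a ∈ lam, 0 < a) ∧ lam.sum = k

/-- `lam'` is a refinement of `lam`: `lam'` is obtained from `lam` by replacing
some parts of `lam` by partitions of these parts. -/
def PartitionRefines (lam' lam : Multiset ℕ) : Prop :=
  ∃ M : Multiset (Multiset ℕ),
    M.map Multiset.sum = lam ∧ M.join = lam' ∧ ∀ m ∈ M, ∀ a ∈ m, 0 < a

/-- `lam ≤ lam'`: there is a partition `lam''` obtained from `lam` by increasing
some of its parts such that `lam'` is a refinement of `lam''`. -/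
def PartitionLE (lam lam' : Multiset ℕ) : Prop :=
  ∃ lam'' : Multiset ℕ, Multiset.Rel (· ≤ ·) lam lam'' ∧ PartitionRefines lam' lam''

/-- `L` is a `lam`-assignment: a `k`-assignment (`k = lam.sum`) such that the set of colours
`⋃ v, L v` can be partitioned into colour groups `C_1, …, C_q` with `|L v ∩ C_i| = k_i`
for every vertex `v` and every part `k_i` of `lam`. -/
def IsLamAssignment {V : Type*} (lam : Multiset ℕ) (L : V → Finset ℕ) : Prop :=
  (∀ v, (L v).card = lam.sum) ∧
  ∃ (q : ℕ) (ks : Fin q → ℕ) (Cs : Fin q → Finset ℕ),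
    (↑(List.ofFn ks) : Multiset ℕ) = lam ∧
    (Pairwise fun i j => Disjoint (Cs i) (Cs j)) ∧
    (∀ c : ℕ, (∃ v, c ∈ L v) ↔ ∃ i, c ∈ Cs i) ∧
    ∀ v i, ((L v) ∩ Cs i).card = ks i

/-- `G` is `lam`-choosable: `G` has a proper `L`-colouring for every `lam`-assignment `L`. -/
def LamChoosable {V : Type*} (lam : Multiset ℕ) (G : SimpleGraph V) : Prop :=
  ∀ L : V → Finset ℕ, IsLamAssignment lam L →
    ∃ f : V → ℕ, (∀ v, f v ∈ L v) ∧ ∀ ⦃u w⦄, G.Adj u w → f u ≠ f w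

namespace Multiset

variable {α β : Type*}

theorem exists_eq_add_of_map_eq_add {f : α → β} {s : Multiset α} {a b : Multiset β}
    (h : s.map f = a + b) : ∃ s₁ s₂, s = s₁ + s₂ ∧ s₁.map f = a ∧ s₂.map f = b := by
  classical
  induction a using Multiset.induction generalizing s with
  | empty => exact ⟨0, s, by simp, by simp, by simpa using h⟩
  | cons x a ih =>
    rw [cons_add, ← map_eq_cons] at h
    obtain ⟨y, hy, rfl, herase⟩ := h
    obtain ⟨s₁, s₂, hs, rfl, rfl⟩ := ih herase
    exact ⟨y ::ₘ s₁, s₂, by rw [cons_add, ← hs, cons_erase hy], map_cons _ _ _, rfl⟩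

theorem exists_join_eq_of_map_eq_join {f : α → β} {s : Multiset α} {M : Multiset (Multiset β)}
    (h : s.map f = M.join) : ∃ N : Multiset (Multiset α), N.join = s ∧ N.map (map f) = M := by
  induction M using Multiset.induction generalizing s with
  | empty => exact ⟨0, by simpa [eq_comm] using h, rfl⟩
  | cons m M ih =>
    rw [join_cons] at h
    obtain ⟨s₁, s₂, rfl, rfl, h₂⟩ := exists_eq_add_of_map_eq_add h
    obtain ⟨N, rfl, rfl⟩ := ih h₂
    exact ⟨s₁ ::ₘ N, join_cons _ _, map_cons _ _ _⟩

theorem Rel.exists_zip {r : α → β → Prop} {s : Multiset α} {t : Multiset β} (h : Rel r s t) :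
    ∃ u : Multiset (α × β), u.map Prod.fst = s ∧ u.map Prod.snd = t ∧ ∀ x ∈ u, r x.1 x.2 := by
  induction h with
  | zero => exact ⟨0, rfl, rfl, by simp⟩
  | @cons a b _ _ hab _ ih =>
    obtain ⟨u, rfl, rfl, hu⟩ := ih
    exact ⟨(a, b) ::ₘ u, map_cons _ _ _, map_cons _ _ _, by simpa [hab] using hu⟩

theorem join_bind (N : Multiset (Multiset α)) (f : α → Multiset β) :
    N.join.bind f = N.bind fun s => s.bind f := by
  induction N using Multiset.induction <;> simp_all

theorem disjoint_of_nodup_bind {s : Multiset α} {f : α → Multiset β} (h : (s.bind f).Nodup)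
    {a b : α} (ha : a ∈ s) (hb : b ∈ s) (hab : a ≠ b) : Disjoint (f a) (f b) :=
  have : Std.Symm fun a b => Disjoint (f a) (f b) := ⟨fun _ _ h => h.symm⟩
  (nodup_bind.1 h).2.forall ha hb hab

end Multiset

open Multiset

/-- The pairs `(k_i, C_i)` of a `lam`-assignment. Unlike in `IsLamAssignment`, the classes need
only contain the colours in use, so that the property survives shrinking the lists. -/
structure IsColourSplitting {V : Type*} (L : V → Finset ℕ) (P : Multiset (ℕ × Multiset ℕ)) :
    Prop where
  nodup : (P.bind Prod.snd).Nodup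
  covers : ∀ v, ∀ c ∈ L v, c ∈ P.bind Prod.snd
  card_filter : ∀ v, ∀ p ∈ P, (p.2.filter (· ∈ L v)).card = p.1

namespace IsColourSplitting

variable {V : Type*} {L : V → Finset ℕ} {P : Multiset (ℕ × Multiset ℕ)}

theorem card_eq_sum (h : IsColourSplitting L P) (v : V) : (L v).card = (P.map Prod.fst).sum := by
  have hL : (L v).val = (P.bind Prod.snd).filter (· ∈ L v) :=
    (Nodup.ext (L v).nodup (h.nodup.filter _)).2 fun c => by
      simpa using fun hc => h.covers v c hc
  rw [← Finset.card_val, hL, filter_bind, card_bind]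
  exact congrArg sum (map_congr rfl fun p hp => h.card_filter v p hp)

theorem merge (h : IsColourSplitting L P) {N : Multiset (Multiset (ℕ × Multiset ℕ))}
    (hN : N.join = P) :
    IsColourSplitting L (N.map fun B => ((B.map Prod.fst).sum, B.bind Prod.snd)) := by
  have hbind : (N.map fun B => ((B.map Prod.fst).sum, B.bind Prod.snd)).bind Prod.snd =
      P.bind Prod.snd := by
    rw [bind_map, ← hN, join_bind]
  refine ⟨hbind ▸ h.nodup, hbind ▸ h.covers, fun v _ hp => ?_⟩
  obtain ⟨B, hB, rfl⟩ := mem_map.1 hp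
  rw [filter_bind, card_bind]
  exact congrArg sum (map_congr rfl fun p hp => h.card_filter v p (hN ▸ mem_join.2 ⟨B, hB, hp⟩))

theorem exists_subset_of_le (h : IsColourSplitting L P) {u : Multiset (ℕ × ℕ × Multiset ℕ)}
    (hu : u.map Prod.snd = P) (hle : ∀ x ∈ u, x.1 ≤ x.2.1) :
    ∃ L' : V → Finset ℕ, (∀ v, L' v ⊆ L v) ∧
      IsColourSplitting L' (u.map fun x => (x.1, x.2.2)) := by
  classical
  have hnodup : (u.bind fun x => x.2.2).Nodup := by
    simpa only [← hu, Multiset.bind_map] using h.nodup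
  choose S hSsub hScard using fun v (x : ℕ × ℕ × Multiset ℕ) =>
    Finset.exists_subset_card_eq (min_le_right x.1 (x.2.2.filter (· ∈ L v)).toFinset.card)
  have hSmem : ∀ {v x c}, c ∈ S v x → c ∈ x.2.2 ∧ c ∈ L v := fun hc => by
    simpa using hSsub _ _ hc
  refine ⟨fun v => u.toFinset.biUnion (S v), fun v c hc => ?_, by rwa [Multiset.bind_map], ?_, ?_⟩
  · obtain ⟨x, -, hcx⟩ := Finset.mem_biUnion.1 hc
    exact (hSmem hcx).2
  · intro v c hc
    obtain ⟨x, hx, hcx⟩ := Finset.mem_biUnion.1 hc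
    rw [Multiset.bind_map]
    exact mem_bind.2 ⟨x, mem_toFinset.1 hx, (hSmem hcx).1⟩
  · intro v p hp
    obtain ⟨x, hx, rfl⟩ := mem_map.1 hp
    have hx_nodup : x.2.2.Nodup := (nodup_bind.1 hnodup).1 x hx
    -- the classes being disjoint, a colour of `x.2.2` can enter `L' v` only through `S v x`
    have hfilter : x.2.2.filter (· ∈ u.toFinset.biUnion (S v)) = (S v x).val := by
      refine (Nodup.ext (hx_nodup.filter _) (S v x).nodup).2 fun c => ?_
      simp only [Multiset.mem_filter, Finset.mem_biUnion, mem_toFinset, Finset.mem_val]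
      refine ⟨fun ⟨hc, y, hy, hcy⟩ => ?_, fun hc => ⟨(hSmem hc).1, x, hx, hc⟩⟩
      by_cases hyx : y = x
      · exact hyx ▸ hcy
      · exact absurd hc (disjoint_left.1 (disjoint_of_nodup_bind hnodup hy hx hyx) (hSmem hcy).1)
    rw [hfilter, Finset.card_val, hScard, min_eq_left]
    rw [toFinset_card_of_nodup (hx_nodup.filter _), h.card_filter v _ (hu ▸ mem_map_of_mem _ hx)]
    exact hle x hx

end IsColourSplitting

section

variable {V : Type*} {L : V → Finset ℕ} {lam lam' lam'' : Multiset ℕ}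

theorem isLamAssignment_iff_exists_colourSplitting :
    IsLamAssignment lam L ↔ ∃ P, P.map Prod.fst = lam ∧ IsColourSplitting L P := by
  classical
  constructor
  · rintro ⟨-, q, ks, Cs, hks, hdisj, hcover, hcard⟩
    refine ⟨Finset.univ.val.map fun i => (ks i, (Cs i).val), ?_, ?_, fun v c hc => ?_,
      fun v p hp => ?_⟩
    · rw [Multiset.map_map]
      simpa [Function.comp_def] using hks
    · rw [Multiset.bind_map]
      exact (Finset.univ.disjiUnion Cs fun i _ j _ hij => hdisj hij).nodup
    · obtain ⟨i, hi⟩ := (hcover c).1 ⟨v, hc⟩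
      exact mem_bind.2 ⟨_, mem_map_of_mem _ (Finset.mem_univ i), hi⟩
    · obtain ⟨i, -, rfl⟩ := mem_map.1 hp
      rw [← hcard v i, Finset.inter_comm, ← Finset.filter_mem_eq_inter]
      rfl
  · rintro ⟨P, rfl, hP⟩
    obtain ⟨q, F, rfl⟩ : ∃ q, ∃ F : Fin q → ℕ × Multiset ℕ, P = Finset.univ.val.map F :=
      ⟨_, P.toList.get, by rw [Fin.univ_val_map, List.ofFn_get, coe_toList]⟩
    have hnodup : (Finset.univ.val.bind fun i => (F i).2).Nodup := by
      simpa only [Multiset.bind_map] using hP.nodup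
    refine ⟨hP.card_eq_sum, q, fun i => (F i).1,
      fun i => (F i).2.toFinset.filter fun c => ∃ v, c ∈ L v, ?_, fun i j hij => ?_, fun c => ?_,
      fun v i => ?_⟩
    · rw [Multiset.map_map, ← Fin.univ_val_map]
      rfl
    · exact Finset.disjoint_filter_filter (disjoint_toFinset.2
        (disjoint_of_nodup_bind hnodup (Finset.mem_univ i) (Finset.mem_univ j) hij))
    · refine ⟨fun ⟨v, hc⟩ => ?_, fun ⟨i, hi⟩ => (Finset.mem_filter.1 hi).2⟩
      obtain ⟨p, hp, hcp⟩ := mem_bind.1 (hP.covers v c hc)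
      obtain ⟨i, -, rfl⟩ := mem_map.1 hp
      exact ⟨i, Finset.mem_filter.2 ⟨mem_toFinset.2 hcp, v, hc⟩⟩
    · dsimp only
      rw [← hP.card_filter v (F i) (mem_map_of_mem _ (Finset.mem_univ i)),
        ← toFinset_card_of_nodup (((nodup_bind.1 hnodup).1 i (Finset.mem_univ i)).filter _)]
      congr 1
      ext c
      simp only [Finset.mem_inter, Finset.mem_filter, mem_toFinset, Multiset.mem_filter]
      exact ⟨fun ⟨hcL, hcF, _⟩ => ⟨hcF, hcL⟩, fun ⟨hcF, hcL⟩ => ⟨hcL, hcF, v, hcL⟩⟩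

theorem IsLamAssignment.of_refines (hL : IsLamAssignment lam' L)
    (href : PartitionRefines lam' lam'') : IsLamAssignment lam'' L := by
  obtain ⟨M, hsum, hjoin, -⟩ := href
  obtain ⟨P, hP, hsplit⟩ := isLamAssignment_iff_exists_colourSplitting.1 hL
  obtain ⟨N, hN, hNM⟩ := exists_join_eq_of_map_eq_join (hP.trans hjoin.symm)
  refine isLamAssignment_iff_exists_colourSplitting.2 ⟨_, ?_, hsplit.merge hN⟩
  rw [← hsum, ← hNM, Multiset.map_map, Multiset.map_map]
  rfl

theorem IsLamAssignment.exists_subset_of_rel (hL : IsLamAssignment lam'' L)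
    (hrel : Rel (· ≤ ·) lam lam'') :
    ∃ L' : V → Finset ℕ, (∀ v, L' v ⊆ L v) ∧ IsLamAssignment lam L' := by
  obtain ⟨P, rfl, hsplit⟩ := isLamAssignment_iff_exists_colourSplitting.1 hL
  obtain ⟨u, hfst, hsnd, hle⟩ := (rel_map_right.1 hrel).exists_zip
  obtain ⟨L', hL'L, hL'⟩ := hsplit.exists_subset_of_le hsnd hle
  refine ⟨L', hL'L, isLamAssignment_iff_exists_colourSplitting.2 ⟨_, ?_, hL'⟩⟩
  rwa [Multiset.map_map]

variable {G : SimpleGraph V}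

theorem LamChoosable.of_refines (h : LamChoosable lam'' G) (href : PartitionRefines lam' lam'') :
    LamChoosable lam' G :=
  fun L hL => h L (hL.of_refines href)

theorem LamChoosable.of_rel (h : LamChoosable lam G) (hrel : Rel (· ≤ ·) lam lam'') :
    LamChoosable lam'' G := by
  intro L hL
  obtain ⟨L', hL'L, hL'⟩ := hL.exists_subset_of_rel hrel
  obtain ⟨f, hfL', hf⟩ := h L' hL'
  exact ⟨f, fun v => hL'L v (hfL' v), hf⟩

end

theorem lamChoosable_of_partitionLE_general (lam lam' : Multiset ℕ) (hle : PartitionLE lam lam')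
    {V : Type*} (G : SimpleGraph V) (h : LamChoosable lam G) :
    LamChoosable lam' G := by
  obtain ⟨lam'', hrel, href⟩ := hle
  exact (h.of_rel hrel).of_refines href

/-- If `lam` and `lam'` are partitions of positive integers `k` and `k'` with `lam ≤ lam'`,
then every `lam`-choosable finite simple graph is `lam'`-choosable. -/
theorem lamChoosable_of_partitionLE (k k' : ℕ) (hk : 0 < k) (hk' : 0 < k')
    (lam lam' : Multiset ℕ) (hlam : IsPartitionOf lam k) (hlam' : IsPartitionOf lam' k')
    (hle : PartitionLE lam lam')
    {V : Type*} [Fintype V] (G : SimpleGraph V) (h : LamChoosable lam G) :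
    LamChoosable lam' G :=
  lamChoosable_of_partitionLE_general lam lam' hle G h
end

section
/- Let λ and λ' be partitions of positive integers. If every λ-choosable finite simple graph is λ'-choosable, then λ ≤ λ'. -/
/-!
Write `λ = (k_i)_{i<q}` and `λ' = (k'_j)_{j<p}`, take disjoint colour groups `C_j` with
`|C_j| = 2 k'_j`, and call a choice of `k'_j` colours in every `C_j` a *shape*. Let `G` be the
join, over `i`, of the disjoint union of one clique `K_{k_i}` per shape. `G` is `λ`-choosable:
colour part `i` from the `i`-th colour class of the assignment, each clique by Hall's theorem.
Giving every vertex its shape as list is a `λ'`-assignment, so `G` has a proper colouring from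
these lists; let `U_i` be the colours used on part `i`. Every shape meets `U_i` in at least `k_i`
colours, and a shape avoiding `U_i` as far as possible shows `k_i ≤ ∑_j (k'_j - |C_j \ U_i|)⁺`.
The `U_i` are disjoint and `|C_j| = 2 k'_j`, so each `j` has a positive term for at most one `i`;
grouping the parts `k'_j` of `λ'` by that `i` yields a partition `λ'' ≥ λ` refined by `λ'`.
-/

open Finset Function

theorem card_fiber_eq_count_ofFn {α : Type*} [DecidableEq α] {n : ℕ} (f : Fin n → α) (c : α) :
    Fintype.card {a // f a = c} = (List.ofFn f).count c := by
  rw [← Multiset.coe_count, ← Fin.univ_val_map, Multiset.count_map, Fintype.card_subtype]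
  simp only [eq_comm]
  rfl

theorem exists_equiv_comp_eq_of_perm_ofFn {α : Type*} [DecidableEq α] {m n : ℕ}
    {f : Fin m → α} {g : Fin n → α} (h : (List.ofFn f).Perm (List.ofFn g)) :
    ∃ e : Fin m ≃ Fin n, g ∘ e = f := by
  refine ⟨Equiv.ofFiberEquiv fun c => Fintype.equivOfCardEq ?_, funext (Equiv.ofFiberEquiv_map _)⟩
  rw [card_fiber_eq_count_ofFn, card_fiber_eq_count_ofFn, h.count_eq]

theorem exists_injective_mem_of_card_le {ι α : Type*} [Fintype ι] [DecidableEq α]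
    (T : ι → Finset α) (hT : ∀ a, Fintype.card ι ≤ #(T a)) :
    ∃ g : ι → α, Injective g ∧ ∀ a, g a ∈ T a := by
  refine (all_card_le_biUnion_card_iff_exists_injective T).mp fun s => ?_
  obtain rfl | ⟨a, ha⟩ := s.eq_empty_or_nonempty
  · simp
  · exact (card_le_univ s).trans ((hT a).trans (card_le_card (subset_biUnion_of_mem T ha)))

theorem exists_subset_card_eq_card_inter_le {α : Type*} [DecidableEq α] (C U : Finset α) {n : ℕ}
    (hn : n ≤ #C) : ∃ B ⊆ C, #B = n ∧ #(B ∩ U) ≤ n - #(C \ U) := by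
  obtain hle | hlt := le_or_gt n #(C \ U)
  · obtain ⟨B, hB, rfl⟩ := exists_subset_card_eq hle
    refine ⟨B, hB.trans sdiff_subset, rfl, ?_⟩
    rw [disjoint_iff_inter_eq_empty.mp (disjoint_of_subset_left hB sdiff_disjoint), card_empty]
    exact Nat.zero_le _
  · obtain ⟨B, hCUB, hBC, rfl⟩ := exists_subsuperset_card_eq sdiff_subset hlt.le hn
    refine ⟨B, hBC, rfl, ?_⟩
    have : B ∩ U ⊆ B \ (C \ U) := fun x hx =>
      mem_sdiff.mpr ⟨(mem_inter.mp hx).1, fun h => (mem_sdiff.mp h).2 (mem_inter.mp hx).2⟩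
    exact (card_le_card this).trans (card_sdiff_of_subset hCUB).le

theorem card_le_card_sdiff_add_card_sdiff {α : Type*} [DecidableEq α] (C : Finset α)
    {U U' : Finset α} (h : Disjoint U U') : #C ≤ #(C \ U) + #(C \ U') := by
  refine (card_le_card fun c hc => ?_).trans (card_union_le _ _)
  by_cases hcU : c ∈ U
  · exact mem_union_right _ (mem_sdiff.mpr ⟨hc, disjoint_left.mp h hcU⟩)
  · exact mem_union_left _ (mem_sdiff.mpr ⟨hc, hcU⟩)

theorem biUnion_inter_eq_of_pairwise_disjoint {ι α : Type*} [Fintype ι] [DecidableEq α]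
    {C B : ι → Finset α} (hC : Pairwise (Disjoint on C)) (hB : ∀ j, B j ⊆ C j) (j : ι) :
    univ.biUnion B ∩ C j = B j := by
  ext c
  simp only [mem_inter, mem_biUnion, mem_univ, true_and]
  refine ⟨fun ⟨⟨j', hj'⟩, hcj⟩ => ?_, fun hc => ⟨⟨j, hc⟩, hB j hc⟩⟩
  obtain rfl | hne := eq_or_ne j' j
  · exact hj'
  · exact absurd hcj (disjoint_left.mp (hC hne) (hB j' hj'))

theorem Finset.val_map_eq_sum_singleton {ι α : Type*} (s : Finset ι) (b : ι → α) :
    s.val.map b = ∑ j ∈ s, {b j} := by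
  rw [sum_eq_multiset_sum, ← Multiset.sum_map_singleton (s.val.map b), Multiset.map_map]
  rfl

theorem partitionLE_of_le_sum_fiber {ι κ : Type*} [Fintype ι] [DecidableEq ι] [Fintype κ]
    (a : ι → ℕ) (b : κ → ℕ) (hb : ∀ j, 0 < b j) (o : κ → ι)
    (h : ∀ i, a i ≤ ∑ j with o j = i, b j) :
    PartitionLE (univ.val.map a) (univ.val.map b) := by
  refine ⟨univ.val.map fun i => ∑ j with o j = i, b j, ?_,
    univ.val.map fun i => (univ.filter (o · = i)).val.map b, ?_, ?_, ?_⟩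
  · rw [Multiset.rel_map]
    exact Multiset.rel_refl_of_refl_on fun i _ => h i
  · rw [Multiset.map_map]
    rfl
  · change ∑ i, (univ.filter (o · = i)).val.map b = _
    simp only [val_map_eq_sum_singleton, sum_fiberwise]
  · intro _ hm _ hc
    obtain ⟨i, -, rfl⟩ := Multiset.mem_map.mp hm
    obtain ⟨j, -, rfl⟩ := Multiset.mem_map.mp hc
    exact hb j

theorem partitionLE_of_excess {ι κ : Type*} [Fintype ι] [DecidableEq ι] [Nonempty ι] [Fintype κ]
    (a : ι → ℕ) (b : κ → ℕ) (hb : ∀ j, 0 < b j) (x : ι → κ → ℕ) (hxb : ∀ i j, x i j ≤ b j)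
    (hx : ∀ j i i', 0 < x i j → 0 < x i' j → i = i') (ha : ∀ i, a i ≤ ∑ j, x i j) :
    PartitionLE (univ.val.map a) (univ.val.map b) := by
  have howner : ∀ j, ∃ i, ∀ i', 0 < x i' j → i' = i := by
    intro j
    by_cases hj : ∃ i, 0 < x i j
    · obtain ⟨i, hi⟩ := hj
      exact ⟨i, fun i' hi' => hx j i' i hi' hi⟩
    · exact ⟨Classical.arbitrary ι, fun i' hi' => absurd ⟨i', hi'⟩ hj⟩
  choose o ho using howner
  refine partitionLE_of_le_sum_fiber a b hb o fun i => (ha i).trans ?_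
  rw [← sum_filter_of_ne fun j _ hj => (ho j i (Nat.pos_of_ne_zero hj)).symm]
  exact sum_le_sum fun j _ => hxb i j

section Assignments

variable {V : Type*} {L : V → Finset ℕ} {q : ℕ} {ks : Fin q → ℕ}

theorem IsLamAssignment.exists_groups (hL : IsLamAssignment (List.ofFn ks) L) :
    ∃ Cs : Fin q → Finset ℕ, Pairwise (Disjoint on Cs) ∧ ∀ v i, #(L v ∩ Cs i) = ks i := by
  obtain ⟨-, q₀, ks₀, Cs₀, hks₀, hdisj, -, hcard⟩ := hL
  obtain ⟨e, he⟩ := exists_equiv_comp_eq_of_perm_ofFn (Multiset.coe_eq_coe.mp hks₀.symm)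
  refine ⟨Cs₀ ∘ e, fun i i' hne => hdisj (e.injective.ne hne), fun v i => ?_⟩
  rw [comp_apply, hcard, ← he, comp_apply]

theorem isLamAssignment_ofFn [Fintype V] (Cs : Fin q → Finset ℕ)
    (hCs : Pairwise (Disjoint on Cs)) (hL : ∀ v, L v ⊆ univ.biUnion Cs)
    (hcard : ∀ v i, #(L v ∩ Cs i) = ks i) : IsLamAssignment (List.ofFn ks) L := by
  have hLv : ∀ v, L v = univ.biUnion fun i => L v ∩ Cs i := fun v => by
    rw [← inter_biUnion, inter_eq_left.mpr (hL v)]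
  refine ⟨fun v => ?_, q, ks, fun i => Cs i ∩ univ.biUnion L, rfl,
    fun i i' hne => (hCs hne).mono inter_subset_left inter_subset_left, fun c => ?_,
    fun v i => ?_⟩
  · rw [Multiset.sum_coe, List.sum_ofFn, hLv, card_biUnion]
    · exact sum_congr rfl fun i _ => hcard v i
    · exact fun i _ i' _ hne => (hCs hne).mono inter_subset_right inter_subset_right
  · simp only [mem_inter, mem_biUnion, mem_univ, true_and]
    refine ⟨fun ⟨v, hc⟩ => ?_, fun ⟨_, _, hc⟩ => hc⟩
    obtain ⟨i, -, hi⟩ := mem_biUnion.mp (hL v hc)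
    exact ⟨i, hi, v, hc⟩
  · rw [← inter_assoc, inter_eq_left.mpr (inter_subset_left.trans (subset_biUnion_of_mem L
      (mem_univ v))), hcard]

end Assignments

section CliqueJoin

variable {q : ℕ} (S : Type*) (ks : Fin q → ℕ)

/-- Part `i` is the disjoint union of the cliques `{⟨i, s, a⟩ | a : Fin (ks i)}`, `s : S`;
distinct parts are completely joined. -/
def cliqueJoin : SimpleGraph (Σ i, S × Fin (ks i)) where
  Adj u v := u ≠ v ∧ (u.1 = v.1 → u.2.1 = v.2.1)
  symm := ⟨fun _ _ h => ⟨h.1.symm, fun e => (h.2 e.symm).symm⟩⟩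
  loopless := ⟨fun _ h => h.1 rfl⟩

variable {S ks} in
theorem cliqueJoin_adj {u v : Σ i, S × Fin (ks i)} :
    (cliqueJoin S ks).Adj u v ↔ u ≠ v ∧ (u.1 = v.1 → u.2.1 = v.2.1) :=
  Iff.rfl

theorem lamChoosable_cliqueJoin : LamChoosable (List.ofFn ks) (cliqueJoin S ks) := by
  intro L hL
  obtain ⟨Cs, hCs, hcard⟩ := hL.exists_groups
  choose g hg hgL using fun i s => exists_injective_mem_of_card_le
    (fun a : Fin (ks i) => L ⟨i, s, a⟩ ∩ Cs i) fun a => by rw [hcard, Fintype.card_fin]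
  refine ⟨fun v => g v.1 v.2.1 v.2.2, fun v => (mem_inter.mp (hgL _ _ _)).1, ?_⟩
  rintro ⟨i, s, a⟩ ⟨i', s', a'⟩ hadj hfe
  change g i s a = g i' s' a' at hfe
  obtain ⟨hne, hsame⟩ := cliqueJoin_adj.mp hadj
  obtain rfl | hi := eq_or_ne i i'
  · obtain rfl : s = s' := hsame rfl
    obtain rfl : a = a' := hg i s hfe
    exact hne rfl
  · exact disjoint_left.mp (hCs hi) (hfe ▸ (mem_inter.mp (hgL i s a)).2)
      (mem_inter.mp (hgL i' s' a')).2

variable {S ks} [Fintype S] {f : (Σ i, S × Fin (ks i)) → ℕ}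

def partColours (f : (Σ i, S × Fin (ks i)) → ℕ) (i : Fin q) : Finset ℕ :=
  univ.image fun x => f ⟨i, x⟩

theorem disjoint_partColours (hf : ∀ ⦃u w⦄, (cliqueJoin S ks).Adj u w → f u ≠ f w)
    {i i' : Fin q} (hne : i ≠ i') : Disjoint (partColours f i) (partColours f i') := by
  simp only [partColours, disjoint_left, mem_image, mem_univ, true_and]
  rintro _ ⟨x, rfl⟩ ⟨x', hx'⟩
  exact hf (cliqueJoin_adj.mpr ⟨fun h => hne (congrArg Sigma.fst h).symm,
    fun h => absurd h.symm hne⟩) hx'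

theorem card_le_card_inter_partColours (L : S → Finset ℕ) (hfL : ∀ v, f v ∈ L v.2.1)
    (hf : ∀ ⦃u w⦄, (cliqueJoin S ks).Adj u w → f u ≠ f w) (i : Fin q) (s : S) :
    ks i ≤ #(L s ∩ partColours f i) := by
  have hinj : Injective fun a : Fin (ks i) => f ⟨i, s, a⟩ := fun a a' h => by
    by_contra hne
    exact hf (u := ⟨i, s, a⟩) (w := ⟨i, s, a'⟩)
      (cliqueJoin_adj.mpr ⟨by simpa using hne, fun _ => rfl⟩) h
  calc ks i = #(univ.image fun a : Fin (ks i) => f ⟨i, s, a⟩) := by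
        rw [card_image_of_injective _ hinj, card_univ, Fintype.card_fin]
    _ ≤ #(L s ∩ partColours f i) := card_le_card fun c hc => by
        obtain ⟨a, -, rfl⟩ := mem_image.mp hc
        exact mem_inter.mpr ⟨hfL _, mem_image.mpr ⟨(s, a), mem_univ _, rfl⟩⟩

end CliqueJoin

section Shapes

variable {p : ℕ} (ks' : Fin p → ℕ)

def colourGroup (j : Fin p) : Finset ℕ :=
  (range (2 * ks' j)).image (Nat.pair j)

theorem card_colourGroup (j : Fin p) : #(colourGroup ks' j) = 2 * ks' j := by
  rw [colourGroup, card_image_of_injective _ fun x y h => (Nat.pair_eq_pair.mp h).2, card_range]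

theorem pairwise_disjoint_colourGroup : Pairwise (Disjoint on colourGroup ks') := by
  intro j j' hne
  simp only [onFun, colourGroup, disjoint_left, mem_image]
  rintro _ ⟨x, -, rfl⟩ ⟨y, -, h⟩
  exact hne (Fin.ext (Nat.pair_eq_pair.mp h).1.symm)

abbrev Shape : Type := ∀ j, powersetCard (ks' j) (colourGroup ks' j)

variable {ks'}

def shapeColours (B : Shape ks') : Finset ℕ :=
  univ.biUnion fun j => (B j : Finset ℕ)

theorem shapeColours_inter_colourGroup (B : Shape ks') (j : Fin p) :
    shapeColours B ∩ colourGroup ks' j = B j :=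
  biUnion_inter_eq_of_pairwise_disjoint (pairwise_disjoint_colourGroup ks')
    (fun j => (mem_powersetCard.mp (B j).2).1) j

theorem isLamAssignment_shapeColours {V : Type*} [Fintype V] (σ : V → Shape ks') :
    IsLamAssignment (List.ofFn ks') (shapeColours ∘ σ) :=
  isLamAssignment_ofFn (colourGroup ks') (pairwise_disjoint_colourGroup ks')
    (fun v => biUnion_mono fun j _ => (mem_powersetCard.mp (σ v j).2).1)
    fun v j => by
      rw [comp_apply, shapeColours_inter_colourGroup, (mem_powersetCard.mp (σ v j).2).2]

theorem card_shapeColours_inter_le (B : Shape ks') (U : Finset ℕ) :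
    #(shapeColours B ∩ U) ≤ ∑ j, #((B j : Finset ℕ) ∩ U) := by
  rw [shapeColours, biUnion_inter]
  exact card_biUnion_le

variable (ks')

theorem exists_shape_card_inter_le (U : Finset ℕ) :
    ∃ B : Shape ks', ∀ j, #((B j : Finset ℕ) ∩ U) ≤ ks' j - #(colourGroup ks' j \ U) := by
  choose B hBC hB hBU using fun j => exists_subset_card_eq_card_inter_le (colourGroup ks' j) U
    (n := ks' j) (by rw [card_colourGroup]; omega)
  exact ⟨fun j => ⟨B j, mem_powersetCard.mpr ⟨hBC j, hB j⟩⟩, hBU⟩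

theorem partitionLE_of_colouring {q : ℕ} {ks : Fin q → ℕ} [Nonempty (Fin q)]
    (hks' : ∀ j, 0 < ks' j) (f : (Σ i, Shape ks' × Fin (ks i)) → ℕ)
    (hfL : ∀ v, f v ∈ shapeColours v.2.1)
    (hf : ∀ ⦃u w⦄, (cliqueJoin (Shape ks') ks).Adj u w → f u ≠ f w) :
    PartitionLE (List.ofFn ks) (List.ofFn ks') := by
  rw [← Fin.univ_val_map, ← Fin.univ_val_map]
  refine partitionLE_of_excess ks ks' hks'
    (fun i j => ks' j - #(colourGroup ks' j \ partColours f i)) (fun _ _ => Nat.sub_le _ _)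
    (fun j i i' hi hi' => ?_) (fun i => ?_)
  · by_contra hne
    have := card_le_card_sdiff_add_card_sdiff (colourGroup ks' j) (disjoint_partColours hf hne)
    rw [card_colourGroup] at this
    omega
  · obtain ⟨B, hB⟩ := exists_shape_card_inter_le ks' (partColours f i)
    calc ks i ≤ #(shapeColours B ∩ partColours f i) :=
          card_le_card_inter_partColours _ hfL hf i B
      _ ≤ ∑ j, #((B j : Finset ℕ) ∩ partColours f i) := card_shapeColours_inter_le B _
      _ ≤ _ := sum_le_sum fun j _ => hB j

end Shapes

theorem Multiset.exists_coe_ofFn {α : Type*} (m : Multiset α) :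
    ∃ (n : ℕ) (f : Fin n → α), (List.ofFn f : Multiset α) = m :=
  ⟨_, m.toList.get, by rw [List.ofFn_get, coe_toList]⟩

theorem partitionLE_of_lamChoosable_general (k k' : ℕ) (hk : 0 < k)
    (lam lam' : Multiset ℕ) (hlam : IsPartitionOf lam k) (hlam' : IsPartitionOf lam' k')
    (h : ∀ (V : Type) [Fintype V] (G : SimpleGraph V),
      LamChoosable lam G → LamChoosable lam' G) :
    PartitionLE lam lam' := by
  obtain ⟨q, ks, rfl⟩ := lam.exists_coe_ofFn
  obtain ⟨p, ks', rfl⟩ := lam'.exists_coe_ofFn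
  have : Nonempty (Fin q) := by
    refine Fin.pos_iff_nonempty.mp (Nat.pos_of_ne_zero fun hq => hk.ne' ?_)
    subst hq
    simpa using hlam.2.symm
  have hks' : ∀ j, 0 < ks' j := fun j => hlam'.1 _ (by simp)
  obtain ⟨f, hfL, hf⟩ := h _ (cliqueJoin (Shape ks') ks) (lamChoosable_cliqueJoin _ ks) _
    (isLamAssignment_shapeColours fun v => v.2.1)
  exact partitionLE_of_colouring ks' hks' f hfL hf

/-- If `lam` and `lam'` are partitions of positive integers `k` and `k'` and every
`lam`-choosable finite simple graph is `lam'`-choosable, then `lam ≤ lam'`. -/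
theorem partitionLE_of_lamChoosable (k k' : ℕ) (hk : 0 < k) (hk' : 0 < k')
    (lam lam' : Multiset ℕ) (hlam : IsPartitionOf lam k) (hlam' : IsPartitionOf lam' k')
    (h : ∀ (V : Type) [Fintype V] (G : SimpleGraph V),
      LamChoosable lam G → LamChoosable lam' G) :
    PartitionLE lam lam' :=
  partitionLE_of_lamChoosable_general k k' hk lam lam' hlam hlam' h
end

section
/- Fix positive integers k, g with g ≥ 3 and a real ε with 0 < ε < 1/(4g). Let F be the complete k-partite graph with partite sets V_1,…,V_k, each of size n, let q = k(k−1)/2, m = ⌊q·n^{1+2ε}⌋, and let 𝒢 be the set of all spanning subgraphs of F with exactly m edges. If n is large enough that n^ε > (g−3)·k^{g−1}, then the total number, summed over all G ∈ 𝒢, of cycles of length at most g−1 in G is less than n^{−ε}·n^{2gε}·|𝒢|. Consequently, the number of graphs G ∈ 𝒢 containing more than n^{2gε} cycles of length at most g−1 is less than n^{−ε}·|𝒢|. -/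
/-- The number of cycles of length at most `b` in `G`: a cycle is identified with its edge
set, so each cycle is counted exactly once. -/
noncomputable def cycleCount {V : Type*} (G : SimpleGraph V) (b : ℕ) : ℕ :=
  Set.ncard {C : Set (Sym2 V) |
    ∃ (v : V) (w : G.Walk v v), w.IsCycle ∧ w.length ≤ b ∧ {e | e ∈ w.edges} = C}

/-- The edge set of the complete `k`-partite graph on `Fin k × Fin n` whose parts are the
fibres of the first projection: the edges are exactly the pairs of vertices with distinct
first coordinates. -/
def kpartEdges (k n : ℕ) : Finset (Sym2 (Fin k × Fin n)) :=
  Finset.univ.filter fun e => ¬ (e.map Prod.fst).IsDiag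

/-!
Double counting. A cycle of length `ℓ` in `G ⊆ F` is an `ℓ`-set `C` of edges of `F` with
`C ⊆ E(G)`; there are at most `|V|^ℓ` of them (one per closed vertex sequence), and an `ℓ`-set
lies in at most a fraction `(m/N)^ℓ` of the `m`-subsets of the `N = q n²` edges of `F`. So the
average number of short cycles is at most `∑_{3 ≤ ℓ ≤ g-1} (kn·m/N)^ℓ ≤ (g-3)(k n^{2ε})^{g-1}`,
which the hypothesis on `n` makes smaller than `n^{-ε} n^{2gε}`. The second claim is Markov's
inequality.
-/

open Finset SimpleGraph

theorem Nat.descFactorial_mul_pow_le_descFactorial_mul_pow {m N : ℕ} (h : m ≤ N) (ℓ : ℕ) :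
    m.descFactorial ℓ * N ^ ℓ ≤ N.descFactorial ℓ * m ^ ℓ := by
  induction ℓ with
  | zero => simp
  | succ ℓ ih =>
    have step : (m - ℓ) * N ≤ (N - ℓ) * m := by
      rw [Nat.sub_mul, Nat.sub_mul, mul_comm m N]
      exact Nat.sub_le_sub_left (Nat.mul_le_mul_left ℓ h) _
    rw [Nat.descFactorial_succ, Nat.descFactorial_succ, pow_succ, pow_succ]
    calc (m - ℓ) * m.descFactorial ℓ * (N ^ ℓ * N)
        = ((m - ℓ) * N) * (m.descFactorial ℓ * N ^ ℓ) := by ring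
      _ ≤ ((N - ℓ) * m) * (N.descFactorial ℓ * m ^ ℓ) := Nat.mul_le_mul step ih
      _ = (N - ℓ) * N.descFactorial ℓ * (m ^ ℓ * m) := by ring

namespace Finset

variable {α : Type*} [DecidableEq α]

theorem card_filter_powersetCard_superset {S C : Finset α} {m : ℕ} (hCS : C ⊆ S)
    (hCm : #C ≤ m) :
    #{E ∈ S.powersetCard m | C ⊆ E} = (#S - #C).choose (m - #C) := by
  rw [← card_sdiff_of_subset hCS, ← card_powersetCard]
  refine card_bij' (fun E _ => E \ C) (fun D _ => D ∪ C) ?_ ?_ ?_ ?_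
  · intro E hE
    simp only [mem_filter, mem_powersetCard] at hE ⊢
    exact ⟨sdiff_subset_sdiff hE.1.1 subset_rfl, by rw [card_sdiff_of_subset hE.2, hE.1.2]⟩
  · intro D hD
    simp only [mem_filter, mem_powersetCard, subset_sdiff] at hD ⊢
    refine ⟨⟨union_subset hD.1.1 hCS, ?_⟩, subset_union_right⟩
    rw [card_union_of_disjoint hD.1.2, hD.2]
    omega
  · intro E hE
    exact sdiff_union_of_subset (mem_filter.mp hE).2
  · intro D hD
    exact union_sdiff_cancel_right (subset_sdiff.mp (mem_powersetCard.mp hD).1).2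

theorem card_filter_powersetCard_superset_mul_pow_le (S C : Finset α) (m : ℕ) :
    #{E ∈ S.powersetCard m | C ⊆ E} * #S ^ #C ≤ (#S).choose m * m ^ #C := by
  by_cases hC : C ⊆ S ∧ #C ≤ m ∧ m ≤ #S
  swap
  · suffices {E ∈ S.powersetCard m | C ⊆ E} = ∅ by simp [this]
    refine filter_false_of_mem fun E hE hCE => hC ?_
    obtain ⟨hES, rfl⟩ := mem_powersetCard.1 hE
    exact ⟨hCE.trans hES, card_le_card hCE, card_le_card hES⟩
  obtain ⟨hCS, hCm, hmS⟩ := hC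
  set ℓ := #C
  set N := #S
  have hdesc :
      N.choose m * m.descFactorial ℓ = N.descFactorial ℓ * (N - ℓ).choose (m - ℓ) := by
    simp only [Nat.descFactorial_eq_factorial_mul_choose]
    linear_combination (ℓ.factorial : ℕ) * Nat.choose_mul (n := N) hCm
  have hpos : 0 < N.descFactorial ℓ :=
    Nat.pos_of_ne_zero fun h => (Nat.descFactorial_eq_zero_iff_lt.1 h).not_ge (card_le_card hCS)
  rw [card_filter_powersetCard_superset hCS hCm]
  refine Nat.le_of_mul_le_mul_left ?_ hpos
  calc N.descFactorial ℓ * ((N - ℓ).choose (m - ℓ) * N ^ ℓ)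
      = N.choose m * (m.descFactorial ℓ * N ^ ℓ) := by rw [← mul_assoc, ← hdesc, mul_assoc]
    _ ≤ N.choose m * (N.descFactorial ℓ * m ^ ℓ) :=
      Nat.mul_le_mul_left _ (Nat.descFactorial_mul_pow_le_descFactorial_mul_pow hmS ℓ)
    _ = N.descFactorial ℓ * (N.choose m * m ^ ℓ) := by ring

theorem card_filter_powersetCard_superset_le (S C : Finset α) (m : ℕ) :
    (#{E ∈ S.powersetCard m | C ⊆ E} : ℝ) ≤ (#S).choose m * ((m : ℝ) / #S) ^ #C := by
  rcases (#S).eq_zero_or_pos with hS | hS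
  · rw [card_eq_zero.1 hS]
    by_cases hC : C = ∅
    · subst hC
      simp
    · rw [filter_false_of_mem fun E hE hCE => hC (subset_empty.1 <|
        hCE.trans (mem_powersetCard.1 hE).1)]
      simp only [card_empty, Nat.cast_zero]
      positivity
  · rw [div_pow, ← mul_div_assoc, le_div_iff₀ (by positivity)]
    exact_mod_cast card_filter_powersetCard_superset_mul_pow_le S C m

end Finset

section

variable {V : Type*}

theorem SimpleGraph.Walk.getVert_finRotate {G : SimpleGraph V} {v : V} (w : G.Walk v v)
    (i : Fin w.length) : w.getVert (finRotate w.length i) = w.getVert (i + 1) := by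
  have := i.neZero
  rw [finRotate_apply, Fin.val_add, Fin.val_one', Nat.add_mod_mod]
  rcases (Nat.add_one_le_of_lt i.isLt).lt_or_eq with h | h
  · rw [Nat.mod_eq_of_lt h]
  · rw [h, Nat.mod_self, getVert_zero, getVert_length]

variable [DecidableEq V]

def cyclicEdges {ℓ : ℕ} (f : Fin ℓ → V) : Finset (Sym2 V) :=
  univ.image fun i => s(f i, f (finRotate ℓ i))

theorem SimpleGraph.Walk.edges_toFinset_eq_cyclicEdges {G : SimpleGraph V} {v : V}
    (w : G.Walk v v) : w.edges.toFinset = cyclicEdges fun i : Fin w.length => w.getVert i := by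
  ext e
  simp only [List.mem_toFinset, List.mem_iff_getElem, getElem_edges, length_edges, cyclicEdges,
    mem_image, mem_univ, true_and, getVert_finRotate]
  exact ⟨fun ⟨i, hi, he⟩ => ⟨⟨i, hi⟩, he⟩, fun ⟨i, he⟩ => ⟨i, i.isLt, he⟩⟩

theorem cycleCount_fromEdgeSet_le [Fintype V] (E : Finset (Sym2 V)) (b : ℕ) :
    cycleCount (fromEdgeSet (E : Set (Sym2 V))) b ≤
      ∑ ℓ ∈ Icc 3 b, #{f : Fin ℓ → V | #(cyclicEdges f) = ℓ ∧ cyclicEdges f ⊆ E} := by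
  classical
  set T := (Icc 3 b).biUnion fun ℓ => Finset.image (fun f => (cyclicEdges f : Set (Sym2 V)))
    {f : Fin ℓ → V | #(cyclicEdges f) = ℓ ∧ cyclicEdges f ⊆ E}
  have hsub : {C : Set (Sym2 V) | ∃ (v : V) (w : (fromEdgeSet (E : Set (Sym2 V))).Walk v v),
      w.IsCycle ∧ w.length ≤ b ∧ {e | e ∈ w.edges} = C} ⊆ T := by
    rintro C ⟨v, w, hw, hlen, rfl⟩
    have hC := w.edges_toFinset_eq_cyclicEdges
    simp only [T, mem_coe, mem_biUnion, mem_Icc, mem_image, mem_filter, mem_univ, true_and]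
    refine ⟨w.length, ⟨hw.three_le_length, hlen⟩, fun i => w.getVert i, ⟨?_, ?_⟩, ?_⟩
    · rw [← hC, List.toFinset_card_of_nodup hw.edges_nodup, Walk.length_edges]
    · intro e he
      rw [← hC, List.mem_toFinset] at he
      exact (edgeSet_fromEdgeSet _ ▸ w.edges_subset_edgeSet he).1
    · rw [← hC, List.coe_toFinset]
  calc _ ≤ #T := (Set.ncard_le_ncard hsub T.finite_toSet).trans (Set.ncard_coe_finset T).le
    _ ≤ _ := card_biUnion_le.trans (sum_le_sum fun _ _ => card_image_le)

end

theorem sum_cycleCount_powersetCard_le {V : Type*} [Fintype V] (S : Finset (Sym2 V)) (m b : ℕ) :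
    ∑ E ∈ S.powersetCard m, (cycleCount (fromEdgeSet (E : Set (Sym2 V))) b : ℝ) ≤
      (#S).choose m * ∑ ℓ ∈ Icc 3 b, (Fintype.card V * m / #S : ℝ) ^ ℓ := by
  classical
  calc ∑ E ∈ S.powersetCard m, (cycleCount (fromEdgeSet (E : Set (Sym2 V))) b : ℝ)
      ≤ ∑ E ∈ S.powersetCard m, ∑ ℓ ∈ Icc 3 b,
          (#{f : Fin ℓ → V | #(cyclicEdges f) = ℓ ∧ cyclicEdges f ⊆ E} : ℝ) :=
        sum_le_sum fun E _ => by exact_mod_cast cycleCount_fromEdgeSet_le E b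
    _ = ∑ ℓ ∈ Icc 3 b, ∑ f : Fin ℓ → V with #(cyclicEdges f) = ℓ,
          (#{E ∈ S.powersetCard m | cyclicEdges f ⊆ E} : ℝ) := by
        rw [sum_comm]
        refine sum_congr rfl fun ℓ _ => ?_
        simp_rw [← filter_filter]
        exact_mod_cast sum_card_bipartiteAbove_eq_sum_card_bipartiteBelow
          (fun E (f : Fin ℓ → V) => cyclicEdges f ⊆ E)
    _ ≤ ∑ ℓ ∈ Icc 3 b, ∑ f : Fin ℓ → V with #(cyclicEdges f) = ℓ,
          ((#S).choose m * ((m : ℝ) / #S) ^ ℓ : ℝ) := by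
        refine sum_le_sum fun ℓ _ => sum_le_sum fun f hf => ?_
        have := card_filter_powersetCard_superset_le S (cyclicEdges f) m
        rwa [(mem_filter.1 hf).2] at this
    _ ≤ ∑ ℓ ∈ Icc 3 b, (Fintype.card V : ℝ) ^ ℓ * ((#S).choose m * ((m : ℝ) / #S) ^ ℓ) := by
        refine sum_le_sum fun ℓ _ => ?_
        rw [sum_const, nsmul_eq_mul]
        gcongr
        exact_mod_cast (card_filter_le _ _).trans_eq (by simp)
    _ = _ := by
        rw [mul_sum]
        refine sum_congr rfl fun ℓ _ => ?_
        rw [mul_div_assoc, mul_pow]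
        ring

theorem sum_pow_le_card_mul_pow {s : Finset ℕ} {x y : ℝ} {b : ℕ} (hx : 0 ≤ x) (hxy : x ≤ y)
    (hy : 1 ≤ y) (hs : ∀ ℓ ∈ s, ℓ ≤ b) : ∑ ℓ ∈ s, x ^ ℓ ≤ #s * y ^ b := by
  rw [← nsmul_eq_mul]
  exact sum_le_card_nsmul _ _ _ fun ℓ hℓ =>
    (pow_le_pow_left₀ hx hxy ℓ).trans (pow_le_pow_right₀ hy (hs ℓ hℓ))

theorem Finset.card_filter_lt_lt_of_sum_lt {ι : Type*} {s : Finset ι} {f : ι → ℝ} {t c : ℝ}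
    (ht : 0 < t) (hf : ∀ i ∈ s, 0 ≤ f i) (h : ∑ i ∈ s, f i < c * t) :
    (#{i ∈ s | t < f i} : ℝ) < c := by
  refine lt_of_mul_lt_mul_right ?_ ht.le
  calc (#{i ∈ s | t < f i} : ℝ) * t = ∑ _ ∈ {i ∈ s | t < f i}, t := by
        rw [sum_const, nsmul_eq_mul]
    _ ≤ ∑ i ∈ {i ∈ s | t < f i}, f i := sum_le_sum fun i hi => (mem_filter.1 hi).2.le
    _ ≤ ∑ i ∈ s, f i := sum_le_sum_of_subset_of_nonneg (filter_subset _ _) fun i hi _ => hf i hi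
    _ < c * t := h

theorem kpartEdges_eq_edgeFinset (k n : ℕ) :
    kpartEdges k n = (completeEquipartiteGraph k n).edgeFinset := by
  ext e
  induction e using Sym2.ind
  simp [kpartEdges]

theorem card_kpartEdges (k n : ℕ) : #(kpartEdges k n) = k * (k - 1) / 2 * n ^ 2 := by
  rw [kpartEdges_eq_edgeFinset, card_edgeFinset_completeEquipartiteGraph, Nat.choose_two_right]

section

variable {k n m : ℕ} {δ : ℝ}

theorem le_card_kpartEdges (hn : 0 < n) (hδ : δ ≤ 1)
    (hm : (m : ℝ) ≤ (k * (k - 1) / 2 : ℕ) * (n : ℝ) ^ (1 + δ)) : m ≤ #(kpartEdges k n) := by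
  have hn1 : (1 : ℝ) ≤ n := by exact_mod_cast hn
  suffices (m : ℝ) ≤ #(kpartEdges k n) by exact_mod_cast this
  calc (m : ℝ) ≤ (k * (k - 1) / 2 : ℕ) * (n : ℝ) ^ (1 + δ) := hm
    _ ≤ (k * (k - 1) / 2 : ℕ) * (n : ℝ) ^ (2 : ℝ) := by
        gcongr
        linarith
    _ = #(kpartEdges k n) := by rw [card_kpartEdges, Real.rpow_two]; push_cast; ring

theorem card_mul_div_card_kpartEdges_le (hn : 0 < n)
    (hm : (m : ℝ) ≤ (k * (k - 1) / 2 : ℕ) * (n : ℝ) ^ (1 + δ)) :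
    (Fintype.card (Fin k × Fin n) * m / #(kpartEdges k n) : ℝ) ≤ k * n ^ δ := by
  have hn0 : (0 : ℝ) < n := by exact_mod_cast hn
  rw [Fintype.card_prod, Fintype.card_fin, Fintype.card_fin, card_kpartEdges]
  rcases (k * (k - 1) / 2).eq_zero_or_pos with hq | hq
  · rw [hq, zero_mul, Nat.cast_zero, div_zero]
    positivity
  rw [div_le_iff₀ (by positivity)]
  push_cast
  calc (k * n * m : ℝ) ≤ k * n * ((k * (k - 1) / 2 : ℕ) * n ^ (1 + δ)) := by gcongr
    _ = k * n ^ δ * ((k * (k - 1) / 2 : ℕ) * n ^ 2) := by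
        rw [Real.rpow_add hn0, Real.rpow_one]
        ring

theorem sum_cycleCount_powersetCard_kpartEdges_le (hk : 0 < k) (hn : 0 < n) (hδ : 0 ≤ δ)
    (hm : (m : ℝ) ≤ (k * (k - 1) / 2 : ℕ) * (n : ℝ) ^ (1 + δ)) (b : ℕ) :
    ∑ E ∈ (kpartEdges k n).powersetCard m,
        (cycleCount (fromEdgeSet (E : Set (Sym2 (Fin k × Fin n)))) b : ℝ) ≤
      #((kpartEdges k n).powersetCard m) * ((b - 2 : ℕ) * (k * n ^ δ) ^ b) := by
  have hy : 1 ≤ (k : ℝ) * n ^ δ := one_le_mul_of_one_le_of_one_le (by exact_mod_cast hk)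
    (Real.one_le_rpow (by exact_mod_cast hn) hδ)
  refine (sum_cycleCount_powersetCard_le _ m b).trans ?_
  rw [card_powersetCard, show b - 2 = #(Icc 3 b) by simp]
  gcongr
  exact sum_pow_le_card_mul_pow (by positivity) (card_mul_div_card_kpartEdges_le hn hm) hy
    fun ℓ hℓ => (mem_Icc.1 hℓ).2

end

open Classical in
/-- Fix `k ≥ 1`, `g ≥ 3` and `0 < ε < 1/(4g)`. Let `F` be the complete `k`-partite graph
with parts of size `n`, `q = k(k-1)/2`, `m = ⌊q·n^(1+2ε)⌋`, and `𝒢` the set of spanning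
subgraphs of `F` with exactly `m` edges (identified with the `m`-subsets of `E(F)`). If `n`
is large enough that `n^ε > (g-3)·k^(g-1)`, then the total number, over all `G ∈ 𝒢`, of
cycles of length at most `g-1` is less than `n^(-ε)·n^(2gε)·|𝒢|`; consequently fewer than
`n^(-ε)·|𝒢|` graphs in `𝒢` have more than `n^(2gε)` cycles of length at most `g-1`. -/
theorem expected_short_cycles (k g n : ℕ) (hk : 0 < k) (hg : 3 ≤ g)
    (ε : ℝ) (hε : 0 < ε) (hεg : ε < 1 / (4 * g))
    (hn : ((g : ℝ) - 3) * (k : ℝ) ^ (g - 1) < (n : ℝ) ^ ε) :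
    ∀ m : ℕ, m = ⌊((k * (k - 1) / 2 : ℕ) : ℝ) * (n : ℝ) ^ ((1 : ℝ) + 2 * ε)⌋₊ →
    ∀ 𝒢 : Finset (Finset (Sym2 (Fin k × Fin n))), 𝒢 = Finset.powersetCard m (kpartEdges k n) →
      (∑ E ∈ 𝒢, (cycleCount (SimpleGraph.fromEdgeSet (↑E : Set (Sym2 (Fin k × Fin n)))) (g - 1) : ℝ))
          < (n : ℝ) ^ (-ε) * (n : ℝ) ^ (2 * (g : ℝ) * ε) * (𝒢.card : ℝ) ∧
      ((𝒢.filter fun E => (n : ℝ) ^ (2 * (g : ℝ) * ε)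
            < (cycleCount (SimpleGraph.fromEdgeSet (↑E : Set (Sym2 (Fin k × Fin n)))) (g - 1) : ℝ)).card : ℝ)
          < (n : ℝ) ^ (-ε) * (𝒢.card : ℝ) := by
  rintro m hm 𝒢 rfl
  have hg3 : (0 : ℝ) ≤ g - 3 := by rw [sub_nonneg]; exact_mod_cast hg
  have hn0 : 0 < n := by
    refine Nat.pos_of_ne_zero fun h => ?_
    rw [h, Nat.cast_zero, Real.zero_rpow hε.ne'] at hn
    exact (mul_nonneg hg3 (by positivity)).not_gt hn
  have hε2 : 2 * ε ≤ 1 := by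
    have : (1 : ℝ) / (4 * g) ≤ 1 / 12 := by gcongr; norm_cast; omega
    linarith
  have hmq : (m : ℝ) ≤ (k * (k - 1) / 2 : ℕ) * (n : ℝ) ^ (1 + 2 * ε) :=
    hm ▸ Nat.floor_le (by positivity)
  have h𝒢 : (0 : ℝ) < #(powersetCard m (kpartEdges k n)) := by
    exact_mod_cast (powersetCard_nonempty.2 (le_card_kpartEdges hn0 hε2 hmq)).card_pos
  have hexp : ((g - 1 - 2 : ℕ) : ℝ) * (k * n ^ (2 * ε)) ^ (g - 1)
      < (n : ℝ) ^ (-ε) * n ^ (2 * g * ε) := by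
    have hpow : ((n : ℝ) ^ (2 * ε)) ^ (g - 1) * n ^ ε = n ^ (-ε) * n ^ (2 * g * ε) := by
      rw [← Real.rpow_natCast, ← Real.rpow_mul (by positivity), ← Real.rpow_add (by positivity),
        ← Real.rpow_add (by positivity), Nat.cast_sub (by omega : 1 ≤ g)]
      ring_nf
    rw [show g - 1 - 2 = g - 3 by omega, Nat.cast_sub hg, ← hpow, mul_pow, ← mul_assoc,
      mul_comm _ ((n : ℝ) ^ ε), Nat.cast_ofNat]
    gcongr
  have hsum := (sum_cycleCount_powersetCard_kpartEdges_le hk hn0 (by positivity) hmq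
    (g - 1)).trans_lt (mul_lt_mul_of_pos_left hexp h𝒢)
  refine ⟨by linarith, ?_⟩
  -- `↑E` makes the statement's filter run over the image of `𝒢` in `Finset (Set _)`
  rw [bind_pure_comp, fmap_def, filter_image]
  refine (Nat.cast_le.2 card_image_le).trans_lt <|
    card_filter_lt_lt_of_sum_lt (by positivity) (fun _ _ => by positivity) ?_
  linarith
end

section
/- Let k, t, r be positive integers, ε > 0 a real number, q = k(k−1)/2, and let G_0 be a k-partite graph with partite sets V_1,…,V_k, each of size n, such that for any i ≠ j and any subsets A ⊆ V_i, B ⊆ V_j with |A|, |B| ≥ ⌊n/t⌋ there are at least (1/2)·n^{1+ε} edges between A and B. If n is large enough that q·(e·k·r^k)^{2n}·(1 − 1/r²)^{n^{1+ε}/4} < 1, then there exists a mapping f : E(G_0) → [r] × [r] such that for every mapping g : V(G_0) → [r], for any 1 ≤ i < j ≤ k and any subsets A ⊆ V_i, B ⊆ V_j with |A|, |B| ≥ ⌊n/t⌋, there is at least one edge e = xy of G_0 with x ∈ A, y ∈ B and f(e) = (g(x), g(y)). -/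
/-! A uniformly random labelling `f` misses the pattern `(g x, g y)` on a fixed edge `xy` with
probability `1 - 1/r²`, independently over edges, so it misses it on every one of the at least
`n^{1+ε}/2` edges between a large pair `(A, B)` with probability at most
`(1 - 1/r²)^{n^{1+ε}/4}`. There are at most `r^{kn}` colourings `g` and `q · 4^n` large pairs,
and `r^{kn} · 4^n ≤ (e k r^k)^{2n}`, so by the union bound some labelling misses no pattern. -/

/-- The number of edges of `G` with one endpoint in `A` and the other in `B`. -/
noncomputable def edgesBetween {V : Type*} (G : SimpleGraph V) (A B : Finset V) : ℕ :=
  Set.ncard {e : Sym2 V | e ∈ G.edgeSet ∧ ∃ a ∈ A, ∃ b ∈ B, e = s(a, b)}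

open Finset

theorem one_sub_one_div_mem_Icc {c : ℝ} (hc : 1 ≤ c) : 1 - 1 / c ∈ Set.Icc (0 : ℝ) 1 :=
  ⟨sub_nonneg.mpr (div_le_one_of_le₀ hc (by positivity)), sub_le_self _ (by positivity)⟩

theorem exists_forall_notMem_of_card_mul_lt_one {Ω ι : Type*} [Fintype Ω] [Nonempty Ω]
    (I : Finset ι) (bad : ι → Finset Ω) (p : ℝ)
    (hbad : ∀ i ∈ I, (#(bad i) : ℝ) ≤ Fintype.card Ω * p) (hI : #I * p < 1) :
    ∃ ω, ∀ i ∈ I, ω ∉ bad i := by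
  classical
  by_contra! h
  have hcover : (univ : Finset Ω) ⊆ I.biUnion bad := fun ω _ => by simpa using h ω
  have : (Fintype.card Ω : ℝ) ≤ Fintype.card Ω * (#I * p) := calc
    (Fintype.card Ω : ℝ) ≤ #(I.biUnion bad) := by exact_mod_cast card_le_card hcover
    _ ≤ ∑ i ∈ I, (#(bad i) : ℝ) := by exact_mod_cast card_biUnion_le
    _ ≤ #I * (Fintype.card Ω * p) := by simpa using sum_le_sum hbad
    _ = Fintype.card Ω * (#I * p) := by ring
  have hΩ : (0 : ℝ) < Fintype.card Ω := by exact_mod_cast Fintype.card_pos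
  nlinarith

theorem card_le_of_forall_mem_exists_ne {α β : Type*} [Fintype α] [DecidableEq α] [Fintype β]
    [Nonempty β] (S : Finset (α → β)) (s : Finset α)
    (h : ∀ a ∈ s, ∃ b, ∀ f ∈ S, f a ≠ b) :
    (#S : ℝ) ≤ Fintype.card (α → β) * (1 - 1 / Fintype.card β) ^ #s := by
  classical
  choose! τ hτ using h
  set T : α → Finset β := fun a => if a ∈ s then univ.erase (τ a) else univ
  have hsub : S ⊆ Fintype.piFinset T := fun f hf => Fintype.mem_piFinset.mpr fun a => by
    by_cases ha : a ∈ s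
    · simp [T, ha, hτ a ha f hf]
    · simp [T, ha]
  have hT (a : α) : (#(T a) : ℝ) =
      Fintype.card β * if a ∈ s then 1 - 1 / (Fintype.card β : ℝ) else 1 := by
    by_cases ha : a ∈ s
    · have hβ : (Fintype.card β : ℝ) ≠ 0 := by positivity
      simp only [T, ha, if_true, card_erase_of_mem (mem_univ _), card_univ]
      rw [Nat.cast_sub Fintype.card_pos]
      field_simp
      simp
    · simp [T, ha]
  calc (#S : ℝ) ≤ #(Fintype.piFinset T) := by exact_mod_cast card_le_card hsub
    _ = ∏ a, (#(T a) : ℝ) := by rw [Fintype.card_piFinset, Nat.cast_prod]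
    _ = _ := by
      simp only [hT, prod_mul_distrib, prod_const, card_univ, prod_ite_mem, univ_inter,
        Fintype.card_fun, Nat.cast_pow]

theorem card_le_of_forall_adj_ne {V β : Type*} [Fintype V] [DecidableEq V] [Fintype β]
    [Nonempty β] (G : SimpleGraph V) (g : V → β) (A B : Finset V) (x : ℝ) (hx₀ : 0 ≤ x)
    (hx : x ≤ edgesBetween G A B) (S : Finset (Sym2 V → β × β))
    (hS : ∀ f ∈ S, ∀ a ∈ A, ∀ b ∈ B, G.Adj a b → f s(a, b) ≠ (g a, g b)) :
    (#S : ℝ) ≤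
      Fintype.card (Sym2 V → β × β) * (1 - 1 / (Fintype.card β : ℝ) ^ 2) ^ x := by
  classical
  set E := {e : Sym2 V | e ∈ G.edgeSet ∧ ∃ a ∈ A, ∃ b ∈ B, e = s(a, b)}
  have hE : edgesBetween G A B = #E.toFinset := Set.ncard_eq_toFinset_card' E
  have hβ : 1 ≤ (Fintype.card β : ℝ) ^ 2 := one_le_pow₀ (by exact_mod_cast Fintype.card_pos)
  obtain ⟨h₀, h₁⟩ := one_sub_one_div_mem_Icc hβ
  have hcount : (#S : ℝ) ≤ Fintype.card (Sym2 V → β × β) *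
      (1 - 1 / (Fintype.card β : ℝ) ^ 2) ^ edgesBetween G A B := by
    simpa [hE, sq] using card_le_of_forall_mem_exists_ne S E.toFinset fun e he => by
      obtain ⟨hadj, a, ha, b, hb, rfl⟩ := Set.mem_toFinset.mp he
      exact ⟨(g a, g b), fun f hf => hS f hf a ha b hb hadj⟩
  refine hcount.trans (mul_le_mul_of_nonneg_left ?_ (by positivity))
  rw [← Real.rpow_natCast]
  exact Real.rpow_le_rpow_of_exponent_ge' h₀ h₁ hx₀ hx

theorem four_pow_mul_pow_le_exp_one_mul_pow {k r : ℕ} (hk : 0 < k) (hr : 0 < r) (n : ℕ) :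
    (4 : ℝ) ^ n * (r : ℝ) ^ (k * n) ≤ (Real.exp 1 * k * (r : ℝ) ^ k) ^ (2 * n) := by
  have he : (2 : ℝ) ≤ Real.exp 1 := by linarith [Real.add_one_le_exp 1]
  have hk : (1 : ℝ) ≤ k := by exact_mod_cast hk
  have hrk : (1 : ℝ) ≤ (r : ℝ) ^ k := one_le_pow₀ (by exact_mod_cast hr)
  rw [pow_mul, pow_mul, ← mul_pow]
  refine pow_le_pow_left₀ (by positivity : (0 : ℝ) ≤ 4 * (r : ℝ) ^ k) ?_ n
  calc 4 * (r : ℝ) ^ k = 2 ^ 2 * 1 ^ 2 * (r : ℝ) ^ k * 1 := by ring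
    _ ≤ Real.exp 1 ^ 2 * (k : ℝ) ^ 2 * (r : ℝ) ^ k * (r : ℝ) ^ k := by gcongr
    _ = (Real.exp 1 * k * (r : ℝ) ^ k) ^ 2 := by ring

theorem Fintype.card_le_mul_of_forall_exists_mem {V ι : Type*} [Fintype V] [DecidableEq V]
    [Fintype ι] (P : ι → Finset V) (n : ℕ) (hcover : ∀ v, ∃ i, v ∈ P i)
    (hcard : ∀ i, #(P i) ≤ n) : Fintype.card V ≤ Fintype.card ι * n := calc
  Fintype.card V ≤ #(univ.biUnion P) :=
    card_le_card fun v _ => mem_biUnion.mpr <| by simpa using hcover v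
  _ ≤ Fintype.card ι * n := by
    simpa using card_biUnion_le_card_mul univ P n fun i _ => hcard i

section LargeCrossPairs

variable {V : Type*} [DecidableEq V] {k : ℕ}

def largeCrossPairs (P : Fin k → Finset V) (m : ℕ) : Finset (Finset V × Finset V) :=
  ({p : Fin k × Fin k | p.1 < p.2} : Finset _).biUnion fun p =>
    {AB ∈ (P p.1).powerset ×ˢ (P p.2).powerset | m ≤ #AB.1 ∧ m ≤ #AB.2}

theorem mem_largeCrossPairs {P : Fin k → Finset V} {m : ℕ} {A B : Finset V} :
    (A, B) ∈ largeCrossPairs P m ↔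
      ∃ i j, i < j ∧ A ⊆ P i ∧ B ⊆ P j ∧ m ≤ #A ∧ m ≤ #B := by
  simp [largeCrossPairs, and_assoc]

theorem card_largeCrossPairs_le {P : Fin k → Finset V} {n : ℕ} (hcard : ∀ i, #(P i) = n)
    (m : ℕ) : #(largeCrossPairs P m) ≤ k * (k - 1) / 2 * 4 ^ n := by
  refine (card_biUnion_le_card_mul _ _ (4 ^ n) fun p _ => ?_).trans ?_
  · calc _ ≤ #((P p.1).powerset ×ˢ (P p.2).powerset) := card_filter_le _ _
      _ = 4 ^ n := by simp [hcard, ← mul_pow]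
  · rw [Fintype.card_product_filter_lt, Fintype.card_fin, Nat.choose_two_right]

theorem pow_card_mul_card_largeCrossPairs_le [Fintype V] {P : Fin k → Finset V} {r n : ℕ}
    (hk : 0 < k) (hr : 0 < r) (hcover : ∀ v, ∃ i, v ∈ P i) (hcard : ∀ i, #(P i) = n)
    (m : ℕ) :
    (r : ℝ) ^ Fintype.card V * #(largeCrossPairs P m) ≤
      ((k * (k - 1) / 2 : ℕ) : ℝ) * (Real.exp 1 * k * (r : ℝ) ^ k) ^ (2 * n) := calc
  _ ≤ (r : ℝ) ^ (k * n) * ((k * (k - 1) / 2 : ℕ) * 4 ^ n : ℕ) := by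
    gcongr
    · exact_mod_cast hr
    · simpa using Fintype.card_le_mul_of_forall_exists_mem P n hcover fun i => (hcard i).le
    · exact card_largeCrossPairs_le hcard m
  _ = ((k * (k - 1) / 2 : ℕ) : ℝ) * (4 ^ n * (r : ℝ) ^ (k * n)) := by push_cast; ring
  _ ≤ _ := by gcongr; exact four_pow_mul_pow_le_exp_one_mul_pow hk hr n

end LargeCrossPairs

theorem exists_good_edge_labelling_general {V : Type*} [Fintype V] [DecidableEq V]
    (k t r n : ℕ) (hk : 0 < k) (hr : 0 < r) (ε : ℝ)
    (G : SimpleGraph V) (P : Fin k → Finset V)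
    (hcover : ∀ v, ∃ i, v ∈ P i)
    (hcard : ∀ i, (P i).card = n)
    (hexp : ∀ i j, i ≠ j → ∀ A ⊆ P i, ∀ B ⊆ P j, n / t ≤ A.card → n / t ≤ B.card →
      (1 / 2 : ℝ) * (n : ℝ) ^ ((1 : ℝ) + ε) ≤ (edgesBetween G A B : ℝ))
    (hn : ((k * (k - 1) / 2 : ℕ) : ℝ) * (Real.exp 1 * k * (r : ℝ) ^ k) ^ (2 * n) *
        (1 - 1 / (r : ℝ) ^ 2) ^ ((n : ℝ) ^ ((1 : ℝ) + ε) / 4) < 1) :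
    ∃ f : Sym2 V → Fin r × Fin r, ∀ g : V → Fin r, ∀ i j : Fin k, i < j →
      ∀ A ⊆ P i, ∀ B ⊆ P j, n / t ≤ A.card → n / t ≤ B.card →
        ∃ x ∈ A, ∃ y ∈ B, G.Adj x y ∧ f s(x, y) = (g x, g y) := by
  classical
  have : NeZero r := ⟨hr.ne'⟩
  set m : ℝ := (n : ℝ) ^ ((1 : ℝ) + ε)
  have hm : 0 ≤ m := by positivity
  set tests := (univ : Finset (V → Fin r)) ×ˢ largeCrossPairs P (n / t)
  let missed : (V → Fin r) × (Finset V × Finset V) → Finset (Sym2 V → Fin r × Fin r) :=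
    fun ⟨g, A, B⟩ => {f | ∀ x ∈ A, ∀ y ∈ B, G.Adj x y → f s(x, y) ≠ (g x, g y)}
  have hmissed : ∀ T ∈ tests, (#(missed T) : ℝ) ≤
      Fintype.card (Sym2 V → Fin r × Fin r) * (1 - 1 / (r : ℝ) ^ 2) ^ (m / 4) := by
    rintro ⟨g, A, B⟩ hT
    obtain ⟨i, j, hij, hA, hB, hAn, hBn⟩ := mem_largeCrossPairs.mp (mem_product.mp hT).2
    simpa using card_le_of_forall_adj_ne G g A B (m / 4) (by positivity)
      (by linarith [hexp i j hij.ne A hA B hB hAn hBn]) (missed (g, A, B)) (by simp [missed])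
  have htests : (#(tests) : ℝ) ≤
      ((k * (k - 1) / 2 : ℕ) : ℝ) * (Real.exp 1 * k * (r : ℝ) ^ k) ^ (2 * n) := by
    simpa [tests] using pow_card_mul_card_largeCrossPairs_le hk hr hcover hcard (n / t)
  have hb : 0 ≤ 1 - 1 / (r : ℝ) ^ 2 :=
    (one_sub_one_div_mem_Icc (one_le_pow₀ (by exact_mod_cast hr : (1 : ℝ) ≤ r))).1
  obtain ⟨f, hf⟩ := exists_forall_notMem_of_card_mul_lt_one tests missed _ hmissed
    ((mul_le_mul_of_nonneg_right htests (Real.rpow_nonneg hb _)).trans_lt hn)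
  refine ⟨f, fun g i j hij A hA B hB hAn hBn => ?_⟩
  simpa [missed] using hf (g, A, B) (mem_product.mpr
    ⟨mem_univ g, mem_largeCrossPairs.mpr ⟨i, j, hij, hA, hB, hAn, hBn⟩⟩)

/-- Let `G` be a `k`-partite graph with parts `P 0, …, P (k-1)` of size `n` such that any two
sets `A ⊆ P i`, `B ⊆ P j` (`i ≠ j`) of size at least `⌊n/t⌋` have at least `(1/2)·n^(1+ε)`
edges between them. If `n` is large enough that
`q·(e·k·r^k)^(2n)·(1 - 1/r²)^(n^(1+ε)/4) < 1` (with `q = k(k-1)/2`), then there is a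
labelling `f : E(G) → [r] × [r]` such that for every `g : V(G) → [r]`, every `i < j`, and all
`A ⊆ P i`, `B ⊆ P j` of size at least `⌊n/t⌋`, some edge `xy` with `x ∈ A`, `y ∈ B` has
`f(xy) = (g x, g y)`. -/
theorem exists_good_edge_labelling {V : Type*} [Fintype V] [DecidableEq V]
    (k t r n : ℕ) (hk : 0 < k) (ht : 0 < t) (hr : 0 < r) (ε : ℝ) (hε : 0 < ε)
    (G : SimpleGraph V) (P : Fin k → Finset V)
    (hdisj : ∀ i j, i ≠ j → Disjoint (P i) (P j))
    (hcover : ∀ v, ∃ i, v ∈ P i)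
    (hcard : ∀ i, (P i).card = n)
    (hpartite : ∀ i, ∀ u ∈ P i, ∀ v ∈ P i, ¬ G.Adj u v)
    (hexp : ∀ i j, i ≠ j → ∀ A ⊆ P i, ∀ B ⊆ P j, n / t ≤ A.card → n / t ≤ B.card →
      (1 / 2 : ℝ) * (n : ℝ) ^ ((1 : ℝ) + ε) ≤ (edgesBetween G A B : ℝ))
    (hn : ((k * (k - 1) / 2 : ℕ) : ℝ) * (Real.exp 1 * k * (r : ℝ) ^ k) ^ (2 * n) *
        (1 - 1 / (r : ℝ) ^ 2) ^ ((n : ℝ) ^ ((1 : ℝ) + ε) / 4) < 1) :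
    ∃ f : Sym2 V → Fin r × Fin r, ∀ g : V → Fin r, ∀ i j : Fin k, i < j →
      ∀ A ⊆ P i, ∀ B ⊆ P j, n / t ≤ A.card → n / t ≤ B.card →
        ∃ x ∈ A, ∃ y ∈ B, G.Adj x y ∧ f s(x, y) = (g x, g y) :=
  exists_good_edge_labelling_general k t r n hk hr ε G P hcover hcard hexp hn
end

section
/- Let G_0 be a graph of girth at least g, and let G be a graph obtained from G_0 as follows: each vertex v of G_0 is replaced by a set S_v of r new vertices inducing a graph of girth at least g, each edge uv of G_0 is replaced by a single edge joining some vertex of S_u to some vertex of S_v, and there are no other edges. Then G has girth at least g. -/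
/-!
A cycle of `G` either stays in one fiber `{v} × Fin r`, where it is a cycle of the fiber graph, or
it meets two fibers. In the second case, projecting it to `V₀` and dropping the steps inside fibers
gives a nontrivial closed walk in `G₀` no longer than the cycle, and this walk repeats no edge
because each edge of `G₀` lifts to exactly one edge of `G`; a circuit of `G₀` has length at least
its girth. Since `girth` is `0` on acyclic graphs, `G` also needs a cycle; the fiber over any
vertex of `G₀` provides one.
-/

namespace SimpleGraph

variable {α β : Type*} {G : SimpleGraph α} {H : SimpleGraph β}

lemma le_girth_iff_of_ne_zero {n : ℕ} (hn : n ≠ 0) :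
    n ≤ G.girth ↔ (n : ℕ∞) ≤ G.egirth ∧ ¬G.IsAcyclic := by
  rw [← egirth_eq_top, girth]
  induction G.egirth using ENat.recTopCoe <;> simp [hn]

lemma Embedding.egirth_le_length_of_support_subset (φ : H ↪g G) {u : α} {w : G.Walk u u}
    (hw : w.IsCycle) (hs : ∀ x ∈ w.support, x ∈ Set.range φ) : H.egirth ≤ w.length := by
  rw [φ.isoInduceRange.egirth_eq]
  let ι := (Embedding.induce (G := G) (Set.range φ)).toHom
  have hc : (w.induce _ hs).IsCycle := by
    rwa [← Walk.isCycle_map_iff_of_injective (f := ι) Subtype.val_injective, Walk.map_induce]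
  simpa [← Walk.length_map ι, ι] using egirth_le_length hc

namespace Walk

variable [DecidableEq β] (f : α → β) (hf : ∀ ⦃x y⦄, G.Adj x y → f x ≠ f y → H.Adj (f x) (f y))

def project : ∀ {u v : α}, G.Walk u v → H.Walk (f u) (f v)
  | _, _, nil => nil
  | u, _, cons (v := c) h p =>
    if hc : f u = f c then p.project.copy hc.symm rfl else cons (hf h hc) p.project

theorem edges_project {u v : α} (w : G.Walk u v) :
    (w.project f hf).edges =
      (w.edges.filter fun e => ¬(e.map f).IsDiag).map (Sym2.map f) := by
  induction w with
  | nil => rfl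
  | @cons u c v h p ih =>
    by_cases hc : f u = f c <;> simp [project, hc, ih]

theorem length_project_le {u v : α} (w : G.Walk u v) : (w.project f hf).length ≤ w.length := by
  simpa [← length_edges, edges_project] using List.length_filter_le _ _

theorem not_nil_project_of_mem_support {u v z : α} {w : G.Walk u v} (hz : z ∈ w.support)
    (hfz : f z ≠ f u) : ¬(w.project f hf).Nil := by
  induction w with
  | nil =>
    rw [support_nil, List.mem_singleton] at hz
    exact (hfz (hz ▸ rfl)).elim
  | @cons u c v h p ih =>
    rw [support_cons, List.mem_cons] at hz
    rcases hz with rfl | hz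
    · exact (hfz rfl).elim
    by_cases hc : f u = f c
    · simpa [project, hc] using ih hz (hc ▸ hfz)
    · simp [project, hc]

theorem IsTrail.project {u v : α} {w : G.Walk u v}
    (hinj : Set.InjOn (Sym2.map f) {d ∈ G.edgeSet | ¬(d.map f).IsDiag}) (hw : w.IsTrail) :
    (w.project f hf).IsTrail := by
  rw [isTrail_def, edges_project]
  refine (hw.edges_nodup.filter _).map_on fun d hd d' hd' => hinj ?_ ?_ <;>
    simp_all [w.edges_subset_edgeSet]

end Walk

section Split

variable {V₀ : Type*} {r : ℕ} {G₀ : SimpleGraph V₀} {G : SimpleGraph (V₀ × Fin r)}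

lemma eq_and_eq_of_adj_of_fst_eq
    (hcross : ∀ u v : V₀, u ≠ v → ∀ a b : Fin r, G.Adj (u, a) (v, b) → G₀.Adj u v)
    (hone : ∀ u v : V₀, G₀.Adj u v → ∃! p : Fin r × Fin r, G.Adj (u, p.1) (v, p.2))
    {x y x' y' : V₀ × Fin r} (h : G.Adj x y) (h' : G.Adj x' y') (hx : x.1 = x'.1)
    (hy : y.1 = y'.1) (hxy : x.1 ≠ y.1) : x = x' ∧ y = y' := by
  obtain ⟨_, -, huniq⟩ := hone _ _ (hcross _ _ hxy _ _ h)
  have h' : G.Adj (x.1, x'.2) (y.1, y'.2) := by rwa [hx, hy]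
  obtain ⟨hx₂, hy₂⟩ := Prod.ext_iff.1 ((huniq (x.2, y.2) h).trans (huniq (x'.2, y'.2) h').symm)
  exact ⟨Prod.ext hx hx₂, Prod.ext hy hy₂⟩

lemma injOn_map_fst_edgeSet
    (hcross : ∀ u v : V₀, u ≠ v → ∀ a b : Fin r, G.Adj (u, a) (v, b) → G₀.Adj u v)
    (hone : ∀ u v : V₀, G₀.Adj u v → ∃! p : Fin r × Fin r, G.Adj (u, p.1) (v, p.2)) :
    Set.InjOn (Sym2.map Prod.fst) {d ∈ G.edgeSet | ¬(d.map Prod.fst).IsDiag} := by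
  rintro ⟨x, y⟩ ⟨h, hxy⟩ ⟨x', y'⟩ ⟨h', -⟩ heq
  simp only [Sym2.map_mk, Sym2.mk_isDiag_iff, mem_edgeSet, Sym2.eq_iff] at h h' hxy heq ⊢
  rcases heq with ⟨hx, hy⟩ | ⟨hx, hy⟩
  · exact .inl (eq_and_eq_of_adj_of_fst_eq hcross hone h h' hx hy hxy)
  · exact .inr (eq_and_eq_of_adj_of_fst_eq hcross hone h h'.symm hx hy hxy)

lemma egirth_le_length_of_fst_ne
    (hcross : ∀ u v : V₀, u ≠ v → ∀ a b : Fin r, G.Adj (u, a) (v, b) → G₀.Adj u v)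
    (hone : ∀ u v : V₀, G₀.Adj u v → ∃! p : Fin r × Fin r, G.Adj (u, p.1) (v, p.2))
    {x z : V₀ × Fin r} {w : G.Walk x x} (hw : w.IsCycle) (hz : z ∈ w.support)
    (hzx : z.1 ≠ x.1) : G₀.egirth ≤ w.length := by
  classical
  have hproj : ∀ ⦃x y : V₀ × Fin r⦄, G.Adj x y → x.1 ≠ y.1 → G₀.Adj x.1 y.1 :=
    fun x y h hxy => hcross _ _ hxy _ _ h
  have hc : (w.project Prod.fst hproj).IsCircuit :=
    (Walk.isCircuit_def _).2 ⟨hw.isTrail.project _ hproj (injOn_map_fst_edgeSet hcross hone),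
      mt Walk.eq_nil_iff_nil.1 (Walk.not_nil_project_of_mem_support _ hproj hz hzx)⟩
  exact hc.egirth_le_length.trans <| by exact_mod_cast Walk.length_project_le _ hproj w

end Split

end SimpleGraph

open SimpleGraph

/-- Let `G₀` be a graph of girth at least `g` on vertex set `V₀`, and let `G` be a graph on
`V₀ × Fin r` obtained by replacing each vertex `v` of `G₀` by the set `S_v = {v} × Fin r`
inducing a graph of girth at least `g`, replacing each edge `uv` of `G₀` by a single edge
between `S_u` and `S_v`, with no other edges. Then `G` has girth at least `g`. -/
theorem girth_of_split {V₀ : Type*} (G₀ : SimpleGraph V₀) (g r : ℕ)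
    (G : SimpleGraph (V₀ × Fin r))
    (hgirth₀ : (g : ℕ∞) ≤ G₀.girth)
    (hfiber : ∀ v : V₀, (g : ℕ∞) ≤ (G.comap fun a : Fin r => (v, a)).girth)
    (hcross : ∀ u v : V₀, u ≠ v → ∀ a b : Fin r, G.Adj (u, a) (v, b) → G₀.Adj u v)
    (hone : ∀ u v : V₀, G₀.Adj u v → ∃! p : Fin r × Fin r, G.Adj (u, p.1) (v, p.2)) :
    (g : ℕ∞) ≤ G.girth := by
  obtain rfl | hg := eq_or_ne g 0
  · simp
  simp only [Nat.cast_le, le_girth_iff_of_ne_zero hg] at hgirth₀ hfiber ⊢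
  let ι (v : V₀) : G.comap (fun a : Fin r => (v, a)) ↪g G :=
    Embedding.comap ⟨_, Prod.mk_right_injective v⟩ G
  refine ⟨le_egirth.2 fun x w hw => ?_, fun hG => ?_⟩
  · by_cases hfib : ∀ z ∈ w.support, z.1 = x.1
    · exact (hfiber x.1).1.trans <| (ι x.1).egirth_le_length_of_support_subset hw
        fun z hz => ⟨z.2, Prod.ext (hfib z hz).symm rfl⟩
    obtain ⟨z, hz, hzx⟩ := not_forall₂.1 hfib
    exact hgirth₀.1.trans (egirth_le_length_of_fst_ne hcross hone hw hz hzx)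
  · simp only [IsAcyclic, not_forall, not_not] at hgirth₀
    obtain ⟨v, -⟩ := hgirth₀.2
    have hle := (ι v).isContained.egirth_le
    rw [egirth_eq_top.2 hG, top_le_iff, egirth_eq_top] at hle
    exact (hfiber v).2 hle
end
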